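/- Let m ∈ (0,1), a ∈ [−π, 0], and b > a. Suppose γ_w(·|m) restricted to [a,b) is injective, γ_w(a|m) = γ_w(b|m), and the unit tangents satisfy γ_w′(a|m)/|γ_w′(a|m)| = −γ_w′(b|m)/|γ_w′(b|m)|. Then m = m_T, a = a_T := −π + α(m_T), and b = b_T := π − α(m_T). In other words, up to scaling, reparametrization and isometries, the teardrop elastica is the only wavelike embedded cuspidal elastica. -/

import Mathlib

open Real MeasureTheory Set

noncomputable section

abbrev E2 := EuclideanSpace ℝ (Fin 2)

/-- The point of the Euclidean plane with coordinates `(a, b)`. -/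
def mkE2 (a b : ℝ) : E2 := WithLp.toLp 2 ![a, b]
/-- Incomplete elliptic integral of the first kind `F(x,m)`. -/
def Fell (x m : ℝ) : ℝ := ∫ θ in (0:ℝ)..x, 1 / Real.sqrt (1 - m * Real.sin θ ^ 2)

/-- Incomplete elliptic integral of the second kind `E(x,m)`. -/
def Eell (x m : ℝ) : ℝ := ∫ θ in (0:ℝ)..x, Real.sqrt (1 - m * Real.sin θ ^ 2)

/-- Complete elliptic integral of the first kind `K(m)`. -/
def Kc (m : ℝ) : ℝ := Fell (Real.pi / 2) m

/-- Complete elliptic integral of the second kind `E(m)`. -/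
def Ec (m : ℝ) : ℝ := Eell (Real.pi / 2) m

/-- `α(m) = arcsin √(1/(2m))`. -/
def alph (m : ℝ) : ℝ := Real.arcsin (Real.sqrt (1 / (2 * m)))

/-- `G(x,m) = ∫₀ˣ (1 − 2m sin²θ)(1 − m sin²θ)^{−1/2} dθ = 2E(x,m) − F(x,m)`. -/
def Gw (x m : ℝ) : ℝ :=
  ∫ θ in (0:ℝ)..x, (1 - 2 * m * Real.sin θ ^ 2) / Real.sqrt (1 - m * Real.sin θ ^ 2)

/-- `f(m) = ∫₀^{π−α(m)} (1 − 2m sin²θ)(1 − m sin²θ)^{−1/2} dθ`; its unique zero is `m_T`. -/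
def fT (m : ℝ) : ℝ := Gw (Real.pi - alph m) m
/-- The wavelike parametrization `γ_w(x|m) = (G(x,m), −2√m cos x)`. -/
def gammaW (m : ℝ) : ℝ → E2 := fun x => mkE2 (Gw x m) (-2 * Real.sqrt m * Real.cos x)

/-!
Closing up gives `cos a = cos b`, and opposite unit tangents then force `b = 2kπ - a` with
`2m sin² a = 1`, i.e. `a = -α(m)` or `a = α(m) - π`. Since `G(·, m)` is odd with
`G(x + π) = G(x) + G(π)`, closing up also gives `G(a) = k G(π)` with `k ≥ 0`, where
`G(π) = G(α) + f(m)` and `G(α) > 0`. As `G(a)` is `-G(α)` or `-f(m)`, this forces `f(m) ≤ 0`.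
If `k ≥ 1`, then `[0, 2π) ⊆ [a, b)` and `G(π - α) = f(m) ≤ G(π) ≤ G(α)`, so some
`x ∈ [α, π - α]` has `G(x) = G(π)`, i.e. `γ_w(x) = γ_w(2π - x)`, against injectivity.
So `k = 0`, which leaves `a = α - π` and `f(m) = 0`. Finally `f` is strictly decreasing on
`[1/2, 1)`: the integrand decreases in `m`, and the interval `[π - α(m₁), π - α(m₂)]` gained
by increasing `m` is where it is nonpositive. Hence `m = m_T`.
-/

open intervalIntegral

lemma mkE2_inj {a b c d : ℝ} : mkE2 a b = mkE2 c d ↔ a = c ∧ b = d := by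
  refine ⟨fun h => ⟨congrFun (congrArg WithLp.ofLp h) 0, congrFun (congrArg WithLp.ofLp h) 1⟩,
    ?_⟩
  rintro ⟨rfl, rfl⟩
  rfl

lemma mkE2_eq_add (a b : ℝ) :
    mkE2 a b = a • EuclideanSpace.single 0 1 + b • EuclideanSpace.single 1 1 := by
  ext i
  fin_cases i <;> simp [mkE2]

lemma smul_mkE2 (r a b : ℝ) : r • mkE2 a b = mkE2 (r * a) (r * b) := by
  simp only [mkE2_eq_add, smul_add, smul_smul]

lemma neg_mkE2 (a b : ℝ) : -mkE2 a b = mkE2 (-a) (-b) := by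
  simpa using smul_mkE2 (-1) a b

lemma norm_mkE2 (a b : ℝ) : ‖mkE2 a b‖ = √(a ^ 2 + b ^ 2) := by
  simp [EuclideanSpace.norm_eq, mkE2, Fin.sum_univ_two, sq_abs]

lemma HasDerivAt.mkE2 {f g : ℝ → ℝ} {f' g' x : ℝ} (hf : HasDerivAt f f' x)
    (hg : HasDerivAt g g' x) : HasDerivAt (fun t => mkE2 (f t) (g t)) (mkE2 f' g') x := by
  simp only [mkE2_eq_add]
  exact (hf.smul_const _).add (hg.smul_const _)

def gwIntegrand (m θ : ℝ) : ℝ := (1 - 2 * m * sin θ ^ 2) / √(1 - m * sin θ ^ 2)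

lemma Gw_eq_integral (x m : ℝ) : Gw x m = ∫ θ in (0 : ℝ)..x, gwIntegrand m θ := rfl

variable {m : ℝ}

lemma one_sub_mul_sin_sq_pos (hm : m < 1) (θ : ℝ) : 0 < 1 - m * sin θ ^ 2 := by
  rcases le_or_gt 0 m with h | h
  · nlinarith [sin_sq_le_one θ]
  · nlinarith [sq_nonneg (sin θ)]

lemma continuous_gwIntegrand (hm : m < 1) : Continuous (gwIntegrand m) :=
  Continuous.div (by fun_prop) (by fun_prop)
    fun θ => (Real.sqrt_pos.2 (one_sub_mul_sin_sq_pos hm θ)).ne'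

lemma gwIntegrand_neg (m θ : ℝ) : gwIntegrand m (-θ) = gwIntegrand m θ := by
  simp [gwIntegrand]

lemma gwIntegrand_pi_sub (m θ : ℝ) : gwIntegrand m (π - θ) = gwIntegrand m θ := by
  simp [gwIntegrand]

lemma periodic_gwIntegrand (m : ℝ) : Function.Periodic (gwIntegrand m) π := by
  intro θ
  simp [gwIntegrand]

lemma gwIntegrand_pos {θ : ℝ} (hm : m < 1) (h : 2 * m * sin θ ^ 2 < 1) :
    0 < gwIntegrand m θ :=
  div_pos (by linarith) (Real.sqrt_pos.2 (one_sub_mul_sin_sq_pos hm θ))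

lemma gwIntegrand_nonpos {θ : ℝ} (h : 1 ≤ 2 * m * sin θ ^ 2) : gwIntegrand m θ ≤ 0 :=
  div_nonpos_of_nonpos_of_nonneg (by linarith) (Real.sqrt_nonneg _)

lemma strictAntiOn_one_sub_two_mul_div_sqrt :
    StrictAntiOn (fun u : ℝ => (1 - 2 * u) / √(1 - u)) (Iio 1) := by
  intro u hu v hv huv
  simp only [mem_Iio] at hu hv
  have hsplit : ∀ w < 1, (1 - 2 * w) / √(1 - w) = 2 * √(1 - w) - 1 / √(1 - w) := by
    intro w hw
    have hsq := Real.sq_sqrt (show 0 ≤ 1 - w by linarith)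
    have := Real.sqrt_pos.2 (show 0 < 1 - w by linarith)
    field_simp
    linarith
  have hsqrt : √(1 - v) < √(1 - u) := Real.sqrt_lt_sqrt (by linarith) (by linarith)
  have := one_div_lt_one_div_of_lt (Real.sqrt_pos.2 (by linarith)) hsqrt
  simp only [hsplit u hu, hsplit v hv]
  linarith

lemma gwIntegrand_le_of_le {m₁ m₂ : ℝ} (h : m₁ ≤ m₂) (hm₂ : m₂ < 1) (θ : ℝ) :
    gwIntegrand m₂ θ ≤ gwIntegrand m₁ θ := by
  have h₁ : m₁ * sin θ ^ 2 ≤ m₂ * sin θ ^ 2 := mul_le_mul_of_nonneg_right h (sq_nonneg _)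
  have h₂ : m₂ * sin θ ^ 2 < 1 := by linarith [one_sub_mul_sin_sq_pos hm₂ θ]
  simpa only [gwIntegrand, mul_assoc] using
    strictAntiOn_one_sub_two_mul_div_sqrt.antitoneOn (h₁.trans_lt h₂) h₂ h₁

lemma gwIntegrand_lt_of_lt {m₁ m₂ θ : ℝ} (h : m₁ < m₂) (hm₂ : m₂ < 1) (hθ : sin θ ≠ 0) :
    gwIntegrand m₂ θ < gwIntegrand m₁ θ := by
  have h₁ : m₁ * sin θ ^ 2 < m₂ * sin θ ^ 2 := mul_lt_mul_of_pos_right h (by positivity)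
  have h₂ : m₂ * sin θ ^ 2 < 1 := by linarith [one_sub_mul_sin_sq_pos hm₂ θ]
  simpa only [gwIntegrand, mul_assoc] using
    strictAntiOn_one_sub_two_mul_div_sqrt (h₁.trans h₂) h₂ h₁

lemma hasDerivAt_Gw (hm : m < 1) (x : ℝ) : HasDerivAt (fun y => Gw y m) (gwIntegrand m x) x :=
  integral_hasDerivAt_right ((continuous_gwIntegrand hm).intervalIntegrable 0 x)
    (continuous_gwIntegrand hm).aestronglyMeasurable.stronglyMeasurableAtFilter
    (continuous_gwIntegrand hm).continuousAt

lemma continuous_Gw (hm : m < 1) : Continuous (fun y => Gw y m) :=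
  continuous_iff_continuousAt.2 fun x => (hasDerivAt_Gw hm x).continuousAt

lemma Gw_neg (x m : ℝ) : Gw (-x) m = -Gw x m := by
  simp only [Gw_eq_integral]
  rw [integral_symm, ← neg_zero, ← integral_comp_neg]
  simp [gwIntegrand_neg]

lemma Gw_add_int_mul_pi (hm : m < 1) (n : ℤ) (x : ℝ) :
    Gw (x + n * π) m = Gw x m + n * Gw π m := by
  have hint := fun a b => (continuous_gwIntegrand hm).intervalIntegrable (μ := volume) a b
  have h := (periodic_gwIntegrand m).intervalIntegral_add_zsmul_eq n 0 hint
  simp only [Gw_eq_integral, ← zsmul_eq_mul,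
    ((periodic_gwIntegrand m).zsmul n).intervalIntegral_add_eq_add 0 x hint]
  simpa using h

lemma Gw_two_mul_int_mul_pi_sub (hm : m < 1) (k : ℤ) (x : ℝ) :
    Gw (2 * k * π - x) m = 2 * k * Gw π m - Gw x m := by
  have h := Gw_add_int_mul_pi hm (2 * k) (-x)
  push_cast at h
  rw [show 2 * k * π - x = -x + 2 * k * π by ring, h, Gw_neg]
  ring

lemma Gw_pi_sub (hm : m < 1) (x : ℝ) : Gw (π - x) m = Gw π m - Gw x m := by
  have h := Gw_add_int_mul_pi hm 1 (-x)
  rw [Int.cast_one, one_mul, Gw_neg, neg_add_eq_sub] at h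
  rw [h]
  ring

lemma hasDerivAt_gammaW (hm : m < 1) (x : ℝ) :
    HasDerivAt (gammaW m) (mkE2 (gwIntegrand m x) (2 * √m * sin x)) x := by
  have hcos : HasDerivAt (fun y => -2 * √m * cos y) (2 * √m * sin x) x := by
    simpa using (hasDerivAt_cos x).const_mul (-2 * √m)
  exact (hasDerivAt_Gw hm x).mkE2 hcos

lemma norm_deriv_gammaW (hm₀ : 0 ≤ m) (hm : m < 1) (x : ℝ) :
    ‖deriv (gammaW m) x‖ = (√(1 - m * sin x ^ 2))⁻¹ := by
  have hq := one_sub_mul_sin_sq_pos hm x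
  rw [(hasDerivAt_gammaW hm x).deriv, norm_mkE2, ← Real.sqrt_inv, gwIntegrand, div_pow,
    Real.sq_sqrt hq.le, mul_pow, mul_pow, Real.sq_sqrt hm₀]
  congr 1
  field_simp
  ring

lemma inv_norm_smul_deriv_gammaW (hm₀ : 0 ≤ m) (hm : m < 1) (x : ℝ) :
    ‖deriv (gammaW m) x‖⁻¹ • deriv (gammaW m) x =
      mkE2 (1 - 2 * m * sin x ^ 2) (2 * √m * sin x * √(1 - m * sin x ^ 2)) := by
  have hs := Real.sqrt_pos.2 (one_sub_mul_sin_sq_pos hm x)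
  rw [norm_deriv_gammaW hm₀ hm, (hasDerivAt_gammaW hm x).deriv, inv_inv, smul_mkE2, gwIntegrand,
    mul_div_cancel₀ _ hs.ne']
  ring_nf

lemma gammaW_eq_gammaW_iff (hm : 0 < m) {a b : ℝ} :
    gammaW m a = gammaW m b ↔ Gw a m = Gw b m ∧ cos a = cos b := by
  have : -2 * √m ≠ 0 := by have := Real.sqrt_pos.2 hm; positivity
  simp only [gammaW, mkE2_inj, mul_right_inj' this]

lemma gammaW_two_pi_sub (hm : m < 1) {x : ℝ} (h : Gw x m = Gw π m) :
    gammaW m (2 * π - x) = gammaW m x := by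
  have := Gw_two_mul_int_mul_pi_sub hm 1 x
  simp only [Int.cast_one, mul_one] at this
  simp only [gammaW, this, h, cos_two_pi_sub]
  ring_nf

lemma sqrt_one_div_two_mul_le_one (hm : 1 / 2 ≤ m) : √(1 / (2 * m)) ≤ 1 :=
  Real.sqrt_le_one.2 (by rw [div_le_one (by linarith)]; linarith)

lemma sin_alph (hm : 1 / 2 ≤ m) : sin (alph m) = √(1 / (2 * m)) :=
  sin_arcsin (by linarith [Real.sqrt_nonneg (1 / (2 * m))]) (sqrt_one_div_two_mul_le_one hm)

lemma two_mul_mul_sin_alph_sq (hm : 1 / 2 ≤ m) : 2 * m * sin (alph m) ^ 2 = 1 := by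
  rw [sin_alph hm, Real.sq_sqrt (by positivity)]
  field_simp

lemma alph_pos (hm : 0 < m) : 0 < alph m :=
  arcsin_pos.2 (Real.sqrt_pos.2 (by positivity))

lemma alph_le_pi_div_two (m : ℝ) : alph m ≤ π / 2 := arcsin_le_pi_div_two _

lemma alph_strictAntiOn : StrictAntiOn alph (Ici (1 / 2)) := by
  intro m₁ hm₁ m₂ hm₂ h
  simp only [mem_Ici] at hm₁ hm₂
  refine arcsin_lt_arcsin (by linarith [Real.sqrt_nonneg (1 / (2 * m₂))]) ?_ ?_
  · exact Real.sqrt_lt_sqrt (by positivity) (one_div_lt_one_div_of_lt (by linarith) (by linarith))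
  · exact sqrt_one_div_two_mul_le_one hm₁

lemma gwIntegrand_pos_of_lt_alph {θ : ℝ} (hm : 1 / 2 ≤ m) (hm₁ : m < 1) (h₀ : 0 ≤ θ)
    (h : θ < alph m) : 0 < gwIntegrand m θ := by
  have hsin : sin θ < sin (alph m) :=
    sin_lt_sin_of_lt_of_le_pi_div_two (by linarith [pi_pos]) (alph_le_pi_div_two m) h
  have hsq : sin θ ^ 2 < sin (alph m) ^ 2 :=
    pow_lt_pow_left₀ hsin
      (sin_nonneg_of_nonneg_of_le_pi h₀ (by linarith [alph_le_pi_div_two m, pi_pos])) two_ne_zero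
  refine gwIntegrand_pos hm₁ ?_
  nlinarith [two_mul_mul_sin_alph_sq hm]

lemma gwIntegrand_nonpos_of_alph_le {θ : ℝ} (hm : 1 / 2 ≤ m) (h : alph m ≤ θ)
    (h' : θ ≤ π / 2) : gwIntegrand m θ ≤ 0 := by
  have hα := alph_pos (show 0 < m by linarith)
  have hsin : sin (alph m) ≤ sin θ :=
    sin_le_sin_of_le_of_le_pi_div_two (by linarith [pi_pos]) h' h
  have hsq : sin (alph m) ^ 2 ≤ sin θ ^ 2 :=
    pow_le_pow_left₀
      (sin_nonneg_of_nonneg_of_le_pi hα.le (by linarith [alph_le_pi_div_two m, pi_pos])) hsin 2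
  refine gwIntegrand_nonpos ?_
  nlinarith [two_mul_mul_sin_alph_sq hm]

lemma Gw_alph_pos (hm : 1 / 2 ≤ m) (hm₁ : m < 1) : 0 < Gw (alph m) m :=
  intervalIntegral_pos_of_pos_on ((continuous_gwIntegrand hm₁).intervalIntegrable _ _)
    (fun _ hθ => gwIntegrand_pos_of_lt_alph hm hm₁ hθ.1.le hθ.2) (alph_pos (by linarith))

lemma fT_strictAntiOn : StrictAntiOn fT (Ico (1 / 2) 1) := by
  rintro m₁ ⟨hm₁, hm₁'⟩ m₂ ⟨hm₂, hm₂'⟩ h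
  have hα : alph m₂ < alph m₁ := alph_strictAntiOn hm₁ hm₂ h
  have hα₁ := alph_le_pi_div_two m₁
  have hint := fun a b => (continuous_gwIntegrand hm₂').intervalIntegrable (μ := volume) a b
  have hsplit : fT m₂ = Gw (π - alph m₁) m₂ +
      ∫ θ in (π - alph m₁)..(π - alph m₂), gwIntegrand m₂ θ :=
    (integral_add_adjacent_intervals (hint _ _) (hint _ _)).symm
  have hhead : Gw (π - alph m₁) m₂ < fT m₁ :=
    integral_lt_integral_of_continuousOn_of_le_of_exists_lt (by linarith [pi_pos])
      (continuous_gwIntegrand hm₂').continuousOn (continuous_gwIntegrand hm₁').continuousOn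
      (fun θ _ => gwIntegrand_le_of_le h.le hm₂' θ)
      ⟨π / 2, ⟨by linarith [pi_pos], by linarith⟩, gwIntegrand_lt_of_lt h hm₂' (by simp)⟩
  have htail : ∫ θ in (π - alph m₁)..(π - alph m₂), gwIntegrand m₂ θ ≤ 0 := by
    rw [← neg_nonneg, ← intervalIntegral.integral_neg]
    refine integral_nonneg (by linarith) fun θ hθ => neg_nonneg.2 ?_
    rw [← gwIntegrand_pi_sub]
    exact gwIntegrand_nonpos_of_alph_le hm₂ (by linarith [hθ.2]) (by linarith [hθ.1])
  linarith

lemma not_injOn_gammaW (hm : 1 / 2 ≤ m) (hm₁ : m < 1) (hf : fT m ≤ 0) :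
    ¬ InjOn (gammaW m) (Ico 0 (2 * π)) := by
  intro hinj
  have hA := Gw_alph_pos hm hm₁
  have hα := alph_pos (show 0 < m by linarith)
  have hα' := alph_le_pi_div_two m
  have hπ : Gw π m = Gw (alph m) m + fT m := by rw [fT, Gw_pi_sub hm₁]; ring
  obtain ⟨x, ⟨hx₁, hx₂⟩, hx⟩ := intermediate_value_Icc' (by linarith)
    (continuous_Gw hm₁).continuousOn
    (show Gw π m ∈ Icc (fT m) (Gw (alph m) m) from ⟨by linarith, by linarith⟩)
  have := hinj ⟨by linarith, by linarith [pi_pos]⟩ ⟨by linarith, by linarith⟩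
    (gammaW_two_pi_sub hm₁ hx).symm
  linarith

lemma one_half_le_of_two_mul_mul_sin_sq_eq_one {x : ℝ} (h : 2 * m * sin x ^ 2 = 1) :
    1 / 2 ≤ m := by
  by_contra! hm
  nlinarith [mul_nonneg (sub_nonneg.2 hm.le) (sq_nonneg (sin x)), sin_sq_le_one x]

lemma eq_neg_alph_or_eq_alph_sub_pi {a : ℝ} (hm : 1 / 2 ≤ m) (ha : a ∈ Icc (-π) 0)
    (h : 2 * m * sin a ^ 2 = 1) : a = -alph m ∨ a = alph m - π := by
  have hα := alph_pos (show 0 < m by linarith)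
  have hα' := alph_le_pi_div_two m
  have hsin : -sin a = sin (alph m) := by
    refine (pow_left_inj₀ (neg_nonneg.2 (sin_nonpos_of_nonpos_of_neg_pi_le ha.2 ha.1))
      (sin_alph hm ▸ Real.sqrt_nonneg _) two_ne_zero).1 ?_
    have := two_mul_mul_sin_alph_sq hm
    have hm₀ : 2 * m ≠ 0 := by positivity
    apply mul_left_cancel₀ hm₀
    linear_combination h - this
  rcases le_or_gt (-(π / 2)) a with h' | h'
  · left
    refine injOn_sin ⟨h', by linarith [ha.2, pi_pos]⟩ ⟨by linarith, by linarith⟩ ?_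
    rw [sin_neg, ← hsin, neg_neg]
  · right
    have : a + π = alph m :=
      injOn_sin ⟨by linarith [ha.1], by linarith⟩ ⟨by linarith, hα'⟩ (by rw [sin_add_pi, hsin])
    linarith

lemma Gw_alph_sub_pi (m : ℝ) : Gw (alph m - π) m = -fT m := by
  rw [fT, ← Gw_neg, neg_sub]

lemma exists_int_of_gammaW_closed_opposite_tangents (hm : m ∈ Ioo 0 1) {a b : ℝ}
    (hclose : gammaW m a = gammaW m b)
    (htang : ‖deriv (gammaW m) a‖⁻¹ • deriv (gammaW m) a =
      -(‖deriv (gammaW m) b‖⁻¹ • deriv (gammaW m) b)) :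
    ∃ k : ℤ, b = 2 * k * π - a ∧ 2 * m * sin a ^ 2 = 1 := by
  obtain ⟨hm₀, hm₁⟩ := hm
  rw [inv_norm_smul_deriv_gammaW hm₀.le hm₁, inv_norm_smul_deriv_gammaW hm₀.le hm₁, neg_mkE2,
    mkE2_inj] at htang
  obtain ⟨hT₁, hT₂⟩ := htang
  obtain ⟨k, hk | hk⟩ := cos_eq_cos_iff.1 ((gammaW_eq_gammaW_iff hm₀).1 hclose).2
  · have hsin : sin b = sin a := by
      rw [hk, show 2 * k * π + a = a + k * (2 * π) by ring, sin_add_int_mul_two_pi]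
    rw [hsin] at hT₁ hT₂
    have hsa : sin a = 0 := by
      have : 2 * √m * sin a * √(1 - m * sin a ^ 2) = 0 := by linarith
      simpa [(Real.sqrt_pos.2 hm₀).ne', (Real.sqrt_pos.2 (one_sub_mul_sin_sq_pos hm₁ a)).ne']
        using this
    rw [hsa] at hT₁
    norm_num at hT₁
  · refine ⟨k, hk, ?_⟩
    have hsin : sin b = -sin a := by
      rw [hk, show 2 * k * π - a = k * (2 * π) - a by ring, sin_int_mul_two_pi_sub]
    rw [hsin, neg_sq] at hT₁
    linarith

/-- Proposition 2.17, uniqueness of wavelike ECEs: if the wavelike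
parametrization `γ_w(·|m)` restricted to `[a, b)` (with `a ∈ [−π, 0]`) is injective, closes up
at its endpoints and has opposite unit tangents there, then `m = m_T`, `a = −π + α(m_T)` and
`b = π − α(m_T)`; i.e. the curve is the teardrop elastica. -/
theorem stmt10 (mT : ℝ) (hmT : mT ∈ Set.Ioo (1/2 : ℝ) 1) (hmTzero : fT mT = 0)
    (m a b : ℝ) (hm : m ∈ Set.Ioo (0:ℝ) 1) (ha : a ∈ Set.Icc (-Real.pi) 0) (hab : a < b)
    (hinj : Set.InjOn (gammaW m) (Set.Ico a b))
    (hclose : gammaW m a = gammaW m b)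
    (htang : (‖deriv (gammaW m) a‖)⁻¹ • deriv (gammaW m) a =
      -((‖deriv (gammaW m) b‖)⁻¹ • deriv (gammaW m) b)) :
    m = mT ∧ a = -Real.pi + alph mT ∧ b = Real.pi - alph mT := by
  obtain ⟨k, hb, hsin⟩ := exists_int_of_gammaW_closed_opposite_tangents hm hclose htang
  have hm₁ := hm.2
  have hm_half := one_half_le_of_two_mul_mul_sin_sq_eq_one hsin
  have hA := Gw_alph_pos hm_half hm₁
  have hπ : Gw π m = Gw (alph m) m + fT m := by rw [fT, Gw_pi_sub hm₁]; ring
  have hk : 0 ≤ k := by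
    by_contra! hk
    have : (k : ℝ) ≤ -1 := by exact_mod_cast (show k ≤ -1 by omega)
    nlinarith [ha.1, pi_pos]
  have hGa : Gw a m = k * Gw π m := by
    have := ((gammaW_eq_gammaW_iff hm.1).1 hclose).1
    rw [hb, Gw_two_mul_int_mul_pi_sub hm₁] at this
    linarith
  have hGa' : Gw a m = -Gw (alph m) m ∨ (a = alph m - π ∧ Gw a m = -fT m) := by
    rcases eq_neg_alph_or_eq_alph_sub_pi hm_half ha hsin with rfl | rfl
    exacts [.inl (Gw_neg _ _), .inr ⟨rfl, Gw_alph_sub_pi m⟩]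
  have hf : fT m ≤ 0 := by
    by_contra! hf
    have := mul_nonneg (show (0 : ℝ) ≤ k by exact_mod_cast hk) (show 0 ≤ Gw π m by linarith)
    rcases hGa' with h | ⟨-, h⟩ <;> linarith
  obtain rfl : k = 0 := by
    by_contra hk₀
    have hk₁ : (1 : ℝ) ≤ k := by exact_mod_cast (show 1 ≤ k by omega)
    have hsub : Ico 0 (2 * π) ⊆ Ico a b := fun x hx =>
      ⟨by linarith [hx.1, ha.2], by nlinarith [hx.2, ha.2, pi_pos]⟩
    exact not_injOn_gammaW hm_half hm₁ hf (hinj.mono hsub)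
  obtain ⟨rfl, hfm⟩ : a = alph m - π ∧ fT m = 0 := by
    simp only [Int.cast_zero, zero_mul] at hGa
    rcases hGa' with h | ⟨ha', h⟩
    exacts [absurd h (by linarith), ⟨ha', by linarith⟩]
  obtain rfl : m = mT :=
    fT_strictAntiOn.injOn ⟨hm_half, hm₁⟩ ⟨hmT.1.le, hmT.2⟩ (hfm.trans hmTzero.symm)
  simp only [Int.cast_zero, mul_zero, zero_mul, zero_sub] at hb
  exact ⟨rfl, by ring, by linarith⟩
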